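/- arXiv:1501.07686 — 3 statements merged into one kernel-verified Lean document; each statement's English description precedes it below -/
import Mathlib

section
/- Let L1 and L2 be two tree languages over a graded alphabet Σ, and let a and b be two distinct symbols in Σ_0 such that L2 ⊆ T(Σ∖{a}), i.e. the symbol a appears in no tree of L2. Then for every integer n ≥ 0, L1^{n,a} ·_b L2 = (L1 ·_b L2)^{n,a}. -/
/-!
Substitution for `b` distributes over substitution for `a`:
`(t ·_a M) ·_b L₂ = (t ·_b L₂) ·_a (M ·_b L₂)`, by structural induction on `t`.
At an `a`-leaf the `b`-product leaves the leaf alone because `a ≠ b`; at a `b`-leaf the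
`a`-product leaves `L₂` alone because `a` does not occur in `L₂`; at any other node both products
act childwise. Summing over `t ∈ L₁` and inducting on `n` gives the theorem.
-/

attribute [local instance] Classical.propDecidable

/-- Trees over a graded alphabet: symbols `α` with arity function `ar`. -/
inductive GTree (α : Type) (ar : α → ℕ) : Type
  | node (f : α) (children : Fin (ar f) → GTree α ar) : GTree α ar

namespace GTree

variable {α : Type} {ar : α → ℕ}

/-- The `c`-product of a tree with a tree language. -/
def cprod (c : α) : GTree α ar → Set (GTree α ar) → Set (GTree α ar)
  | node f ch, L =>
    if f = c then L
    else { s | ∃ ch' : Fin (ar f) → GTree α ar,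
            s = node f ch' ∧ ∀ i, ch' i ∈ cprod c (ch i) L }

/-- The `c`-product of two tree languages. -/
def lprod (c : α) (L L' : Set (GTree α ar)) : Set (GTree α ar) :=
  ⋃ t ∈ L, cprod c t L'

/-- The single-node tree `c`, for `c` of rank 0. -/
def leaf (c : α) (hc : ar c = 0) : GTree α ar :=
  node c (fun i => (i.cast hc).elim0)

/-- The iterated `c`-product `L^{n,c}`. -/
def iterProd (c : α) (hc : ar c = 0) (L : Set (GTree α ar)) : ℕ → Set (GTree α ar)
  | 0 => {leaf c hc}
  | n + 1 => iterProd c hc L n ∪ lprod c L (iterProd c hc L n)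

/-- The `c`-closure `L^{*_c}`. -/
def closure (c : α) (hc : ar c = 0) (L : Set (GTree α ar)) : Set (GTree α ar) :=
  ⋃ n, iterProd c hc L n

/-- The symbol `a` occurs (appears) in the tree. -/
def occurs (a : α) : GTree α ar → Prop
  | node f ch => f = a ∨ ∃ i, occurs a (ch i)

end GTree

namespace GTree

variable {α : Type} {ar : α → ℕ}

theorem cprod_node_self (c : α) (ch : Fin (ar c) → GTree α ar) (L : Set (GTree α ar)) :
    cprod c (node c ch) L = L := by
  rw [cprod, if_pos rfl]

theorem cprod_node_of_ne {c f : α} (hf : f ≠ c) (ch : Fin (ar f) → GTree α ar)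
    (L : Set (GTree α ar)) :
    cprod c (node f ch) L = node f '' Set.univ.pi fun i => cprod c (ch i) L := by
  rw [cprod, if_neg hf]
  ext s
  simp only [Set.mem_ofPred_eq, Set.mem_image, Set.mem_univ_pi]
  exact exists_congr fun ch' => by rw [eq_comm, and_comm]

theorem cprod_of_not_occurs {c : α} {t : GTree α ar} (h : ¬ occurs c t) (L : Set (GTree α ar)) :
    cprod c t L = {t} := by
  induction t with
  | node f ch ih =>
    simp only [occurs, not_or, not_exists] at h
    simp only [cprod_node_of_ne h.1, fun i => ih i (h.2 i), Set.univ_pi_singleton,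
      Set.image_singleton]

theorem cprod_node_of_ar_eq_zero {c f : α} (hne : f ≠ c) (hf : ar f = 0)
    (ch : Fin (ar f) → GTree α ar) (L : Set (GTree α ar)) :
    cprod c (node f ch) L = {node f ch} := by
  refine cprod_of_not_occurs ?_ L
  rintro (h | ⟨i, -⟩)
  exacts [hne h, (i.cast hf).elim0]

theorem lprod_singleton (c : α) (t : GTree α ar) (L : Set (GTree α ar)) :
    lprod c {t} L = cprod c t L := by
  simp [lprod]

theorem lprod_union (c : α) (S T L : Set (GTree α ar)) :
    lprod c (S ∪ T) L = lprod c S L ∪ lprod c T L :=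
  Set.biUnion_union S T _

theorem lprod_biUnion {β : Type*} (c : α) (S : Set β) (F : β → Set (GTree α ar))
    (L : Set (GTree α ar)) :
    lprod c (⋃ x ∈ S, F x) L = ⋃ x ∈ S, lprod c (F x) L := by
  simp only [lprod, Set.biUnion_iUnion]

theorem lprod_of_not_occurs {c : α} {L : Set (GTree α ar)} (h : ∀ t ∈ L, ¬ occurs c t)
    (L' : Set (GTree α ar)) : lprod c L L' = L := by
  rw [lprod, Set.iUnion₂_congr fun t ht => cprod_of_not_occurs (h t ht) L',
    Set.biUnion_of_singleton]

theorem lprod_image_node_pi {c f : α} (hf : f ≠ c) (S : Fin (ar f) → Set (GTree α ar))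
    (L : Set (GTree α ar)) :
    lprod c (node f '' Set.univ.pi S) L = node f '' Set.univ.pi fun i => lprod c (S i) L := by
  simp only [lprod, Set.biUnion_image, cprod_node_of_ne hf]
  ext s
  simp only [Set.mem_iUnion, Set.mem_image, Set.mem_univ_pi, exists_prop]
  constructor
  · rintro ⟨ch, hch, ch', hch', rfl⟩
    exact ⟨ch', fun i => ⟨ch i, hch i, hch' i⟩, rfl⟩
  · rintro ⟨ch', hch', rfl⟩
    choose ch hch using hch'
    exact ⟨ch, fun i => (hch i).1, ch', fun i => (hch i).2, rfl⟩

theorem lprod_cprod_distrib {a b : α} (hab : a ≠ b) (ha : ar a = 0) (hb : ar b = 0)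
    {L : Set (GTree α ar)} (hL : ∀ t ∈ L, ¬ occurs a t) (t : GTree α ar)
    (M : Set (GTree α ar)) :
    lprod b (cprod a t M) L = lprod a (cprod b t L) (lprod b M L) := by
  induction t with
  | node f ch ih =>
    rcases eq_or_ne f a with rfl | hfa
    · rw [cprod_node_self, cprod_node_of_ar_eq_zero hab ha, lprod_singleton, cprod_node_self]
    rcases eq_or_ne f b with rfl | hfb
    · rw [cprod_node_of_ar_eq_zero hfa hb, lprod_singleton, cprod_node_self,
        lprod_of_not_occurs hL]
    rw [cprod_node_of_ne hfa, cprod_node_of_ne hfb, lprod_image_node_pi hfb,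
      lprod_image_node_pi hfa]
    simp only [ih]

theorem lprod_lprod_distrib {a b : α} (hab : a ≠ b) (ha : ar a = 0) (hb : ar b = 0)
    {L : Set (GTree α ar)} (hL : ∀ t ∈ L, ¬ occurs a t) (K M : Set (GTree α ar)) :
    lprod b (lprod a K M) L = lprod a (lprod b K L) (lprod b M L) := by
  change lprod b (⋃ t ∈ K, cprod a t M) L = lprod a (⋃ t ∈ K, cprod b t L) (lprod b M L)
  simp only [lprod_biUnion, lprod_cprod_distrib hab ha hb hL]

end GTree

/-- if `a ≠ b` are rank-0 symbols and `a` appears in no tree of `L2`,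
then for every `n`, `L1^{n,a} ·_b L2 = (L1 ·_b L2)^{n,a}`. -/
theorem iterProd_lprod {α : Type} {ar : α → ℕ} (a b : α)
    (ha : ar a = 0) (hb : ar b = 0) (hab : a ≠ b)
    (L1 L2 : Set (GTree α ar)) (h2 : ∀ t ∈ L2, ¬ GTree.occurs a t) :
    ∀ n : ℕ, GTree.lprod b (GTree.iterProd a ha L1 n) L2 =
      GTree.iterProd a ha (GTree.lprod b L1 L2) n := by
  intro n
  induction n with
  | zero => rw [GTree.iterProd, GTree.iterProd, GTree.lprod_singleton, GTree.leaf,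
      GTree.cprod_node_of_ar_eq_zero hab ha]
  | succ n ih => rw [GTree.iterProd, GTree.iterProd, GTree.lprod_union, ih,
      GTree.lprod_lprod_distrib hab ha hb h2, ih]
end

section
/- (Arden's lemma for trees, minimality part.) Let A and B be two tree languages over a graded alphabet Σ and let c be a symbol in Σ_0. Then for every tree language C over Σ satisfying C = A ·_c C ∪ B, one has A^{*_c} ·_c B ⊆ C; that is, A^{*_c} ·_c B is the smallest language L satisfying L = A ·_c L ∪ B. -/
attribute [local instance] Classical.propDecidable

/-! By induction on `n`, `A^{n,c} ·_c B ⊆ C` for every `C` closed under `A ·_c -` and containing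
`B`: the step uses that the `c`-product is monotone in its right argument and satisfies the
associativity inclusion `(A ·_c L) ·_c B ⊆ A ·_c (L ·_c B)`. -/

namespace GTree

variable {α : Type} {ar : α → ℕ} (c : α)

theorem cprod_mono (t : GTree α ar) {L L' : Set (GTree α ar)} (h : L ⊆ L') :
    cprod c t L ⊆ cprod c t L' := by
  induction t with
  | node f ch ih =>
    by_cases hf : f = c
    · simpa [cprod, hf] using h
    · simp only [cprod, hf, if_false]
      rintro _ ⟨ch', rfl, hch⟩
      exact ⟨ch', rfl, fun i => ih i (hch i)⟩

theorem cprod_cprod_subset (a : GTree α ar) {X B : Set (GTree α ar)} {t : GTree α ar}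
    (ht : t ∈ cprod c a X) : cprod c t B ⊆ cprod c a (lprod c X B) := by
  induction a generalizing t with
  | node f ch ih =>
    by_cases hf : f = c
    · simp only [cprod, hf, if_true] at ht ⊢
      exact Set.subset_biUnion_of_mem (u := fun t => cprod c t B) ht
    · simp only [cprod, hf, if_false] at ht ⊢
      obtain ⟨ch', rfl, hch⟩ := ht
      simp only [cprod, hf, if_false]
      rintro _ ⟨ch'', rfl, hch''⟩
      exact ⟨ch'', rfl, fun i => ih i (hch i) (hch'' i)⟩

theorem lprod_mono_right (L : Set (GTree α ar)) {L' L'' : Set (GTree α ar)} (h : L' ⊆ L'') :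
    lprod c L L' ⊆ lprod c L L'' :=
  Set.biUnion_mono subset_rfl fun t _ => cprod_mono c t h

theorem lprod_lprod_subset (A X B : Set (GTree α ar)) :
    lprod c (lprod c A X) B ⊆ lprod c A (lprod c X B) := by
  simp only [lprod, Set.iUnion₂_subset_iff, Set.mem_iUnion₂]
  rintro t ⟨a, ha, ht⟩
  exact (cprod_cprod_subset c a ht).trans
    (Set.subset_biUnion_of_mem (u := fun a => cprod c a _) ha)

theorem lprod_union_left (X Y B : Set (GTree α ar)) :
    lprod c (X ∪ Y) B = lprod c X B ∪ lprod c Y B :=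
  Set.biUnion_union X Y _

theorem lprod_iUnion_left {ι : Type*} (X : ι → Set (GTree α ar)) (B : Set (GTree α ar)) :
    lprod c (⋃ i, X i) B = ⋃ i, lprod c (X i) B :=
  Set.biUnion_iUnion X _

theorem lprod_leaf (hc : ar c = 0) (B : Set (GTree α ar)) : lprod c {leaf c hc} B = B := by
  simp [lprod, leaf, cprod]

theorem lprod_iterProd_subset {hc : ar c = 0} {A B C : Set (GTree α ar)}
    (hA : lprod c A C ⊆ C) (hB : B ⊆ C) (n : ℕ) : lprod c (iterProd c hc A n) B ⊆ C := by
  induction n with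
  | zero => simpa only [iterProd, lprod_leaf] using hB
  | succ n ih =>
    rw [iterProd, lprod_union_left]
    refine Set.union_subset ih ?_
    calc lprod c (lprod c A (iterProd c hc A n)) B
        ⊆ lprod c A (lprod c (iterProd c hc A n) B) := lprod_lprod_subset c _ _ _
      _ ⊆ lprod c A C := lprod_mono_right c A ih
      _ ⊆ C := hA

theorem lprod_closure_subset {hc : ar c = 0} {A B C : Set (GTree α ar)}
    (hA : lprod c A C ⊆ C) (hB : B ⊆ C) : lprod c (closure c hc A) B ⊆ C := by
  rw [closure, lprod_iUnion_left]
  exact Set.iUnion_subset (lprod_iterProd_subset c hA hB)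

end GTree

/-- Arden's lemma for trees, minimality part: for every tree
language `C` with `C = A ·_c C ∪ B`, one has `A^{*_c} ·_c B ⊆ C`. -/
theorem arden_minimal {α : Type} {ar : α → ℕ} (c : α) (hc : ar c = 0)
    (A B : Set (GTree α ar)) :
    ∀ C : Set (GTree α ar), C = GTree.lprod c A C ∪ B →
      GTree.lprod c (GTree.closure c hc A) B ⊆ C := by
  intro C hC
  have hAB := Set.union_subset_iff.mp hC.ge
  exact GTree.lprod_closure_subset c hAB.1 hAB.2
end

section
/- Let 𝒳 = {𝔼_j = F_j | 1 ≤ j ≤ n} be an equation system over (Σ, {𝔼_1,…,𝔼_n}), and let 𝔼_k = F_k be an equation such that the variable 𝔼_k does not occur in F_k (the equation is not recursive). Then for every (n−1)-tuple Z = (L_1,…,L_{k−1},L_{k+1},…,L_n) of tree languages, the following are equivalent: (1) the n-tuple (L_1,…,L_{k−1}, L_Z(F_k), L_{k+1},…,L_n) is a solution of 𝒳; (2) Z is a solution of the system 𝒳^k ∖ {𝔼_k = F_k} over the remaining n−1 variables, where 𝒳^k is obtained from 𝒳 by substituting F_k for 𝔼_k in every other right-hand side. -/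
/-! Substituting `F` for `x` in an expression and evaluating it amounts to evaluating the original
expression with `x` reassigned to the language of `F`. The tuple of (1) is exactly `Z` reassigned
at `k` to `L_Z(F_k)`, so its equations for `j ≠ k` are those of (2); its equation for `k` holds
automatically, because `𝔼_k` does not occur in `F_k`, so `F_k` evaluates to `L_Z(F_k)` under it. -/

attribute [local instance] Classical.propDecidable

/-- Rational tree expressions over alphabet `(α, ar)` and variables `V`.
In the products and closures, the subscript symbol is required to have rank 0. -/
inductive RExp (α : Type) (ar : α → ℕ) (V : Type) : Type
  | zero : RExp α ar V
  | var (v : V) : RExp α ar V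
  | node (f : α) (es : Fin (ar f) → RExp α ar V) : RExp α ar V
  | plus (e₁ e₂ : RExp α ar V) : RExp α ar V
  | prod (c : α) (hc : ar c = 0) (e₁ e₂ : RExp α ar V) : RExp α ar V
  | star (c : α) (hc : ar c = 0) (e : RExp α ar V) : RExp α ar V

namespace RExp

variable {α : Type} {ar : α → ℕ} {V : Type}

/-- The `𝓛`-language denoted by a rational expression, where `ρ` assigns a
tree language to each variable. -/
def lang (ρ : V → Set (GTree α ar)) : RExp α ar V → Set (GTree α ar)
  | zero => ∅
  | var v => ρ v
  | node f es => { t | ∃ ch : Fin (ar f) → GTree α ar,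
      t = GTree.node f ch ∧ ∀ i, ch i ∈ lang ρ (es i) }
  | plus e₁ e₂ => lang ρ e₁ ∪ lang ρ e₂
  | prod c _ e₁ e₂ => GTree.lprod c (lang ρ e₁) (lang ρ e₂)
  | star c hc e => GTree.closure c hc (lang ρ e)

/-- Substitution of the expression `F` for the variable `x`. -/
noncomputable def subst (x : V) (F : RExp α ar V) : RExp α ar V → RExp α ar V
  | zero => zero
  | var v => if v = x then F else var v
  | node f es => node f (fun i => subst x F (es i))
  | plus e₁ e₂ => plus (subst x F e₁) (subst x F e₂)
  | prod c hc e₁ e₂ => prod c hc (subst x F e₁) (subst x F e₂)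
  | star c hc e => star c hc (subst x F e)

/-- The variable `v` occurs in the expression. -/
def varOcc (v : V) : RExp α ar V → Prop
  | zero => False
  | var w => w = v
  | node _ es => ∃ i, varOcc v (es i)
  | plus e₁ e₂ => varOcc v e₁ ∨ varOcc v e₂
  | prod _ _ e₁ e₂ => varOcc v e₁ ∨ varOcc v e₂
  | star _ _ e => varOcc v e

/-- The symbol `b` is the subscript of a product `·_b` or a closure `^{*_b}`
occurring in the expression. -/
def opSym (b : α) : RExp α ar V → Prop
  | zero => False
  | var _ => False
  | node _ es => ∃ i, opSym b (es i)
  | plus e₁ e₂ => opSym b e₁ ∨ opSym b e₂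
  | prod c _ e₁ e₂ => c = b ∨ opSym b e₁ ∨ opSym b e₂
  | star c _ e => c = b ∨ opSym b e

/-- The symbol `s` occurs somewhere in the expression (as a node symbol or as
the subscript of an operator). -/
def symIn (s : α) : RExp α ar V → Prop
  | zero => False
  | var _ => False
  | node f es => f = s ∨ ∃ i, symIn s (es i)
  | plus e₁ e₂ => symIn s e₁ ∨ symIn s e₂
  | prod c _ e₁ e₂ => c = s ∨ symIn s e₁ ∨ symIn s e₂
  | star c _ e => c = s ∨ symIn s e

end RExp

/-- The output function of a tree automaton with transition set `Δ`:
`δ(f(t₁,…,tₙ)) = {q | ∃(f,q₁,…,qₙ,q) ∈ Δ, ∀ i, qᵢ ∈ δ(tᵢ)}`. -/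
def GTree.out {α : Type} {ar : α → ℕ} {Q : Type}
    (Δ : Set (Sigma fun f : α => (Fin (ar f) → Q) × Q)) : GTree α ar → Set Q
  | .node f ch => { q | ∃ qs : Fin (ar f) → Q,
      (⟨f, qs, q⟩ : Sigma fun f : α => (Fin (ar f) → Q) × Q) ∈ Δ ∧
      ∀ i, qs i ∈ GTree.out Δ (ch i) }

namespace RExp

variable {α : Type} {ar : α → ℕ} {V : Type}

theorem lang_congr {ρ ρ' : V → Set (GTree α ar)} (e : RExp α ar V)
    (h : ∀ v, varOcc v e → ρ v = ρ' v) : lang ρ e = lang ρ' e := by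
  induction e with
  | zero => rfl
  | var v => exact h v rfl
  | node f es ih => simp only [lang, fun i => ih i fun v hv => h v ⟨i, hv⟩]
  | plus e₁ e₂ ih₁ ih₂ | prod c hc e₁ e₂ ih₁ ih₂ =>
      simp only [lang, ih₁ fun v hv => h v (Or.inl hv), ih₂ fun v hv => h v (Or.inr hv)]
  | star c hc e ih => simp only [lang, ih h]

theorem lang_update_of_not_varOcc [DecidableEq V] (ρ : V → Set (GTree α ar)) {x : V}
    (L : Set (GTree α ar)) {e : RExp α ar V} (hx : ¬ varOcc x e) :
    lang (Function.update ρ x L) e = lang ρ e :=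
  lang_congr e fun v hv =>
    Function.update_of_ne (a := v) (a' := x) (by rintro rfl; exact hx hv) L ρ

theorem lang_subst [DecidableEq V] (ρ : V → Set (GTree α ar)) (x : V) (F e : RExp α ar V) :
    lang ρ (subst x F e) = lang (Function.update ρ x (lang ρ F)) e := by
  induction e with
  | zero => rfl
  | var v => by_cases hv : v = x <;> simp [subst, lang, hv]
  | node f es ih => simp only [subst, lang, ih]
  | plus e₁ e₂ ih₁ ih₂ | prod c hc e₁ e₂ ih₁ ih₂ => simp only [subst, lang, ih₁, ih₂]
  | star c hc e ih => simp only [subst, lang, ih]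

end RExp

/-- `Z` is indexed by the variables `≠ k`; `ext` extends it by `∅` at `k`, a value never read by
the expressions it is applied to, since they do not contain `𝔼_k`. -/
theorem solve_nonrecursive_equation {α : Type} {ar : α → ℕ} {n : ℕ}
    (F : Fin n → RExp α ar (Fin n)) (k : Fin n)
    (hk : ¬ RExp.varOcc k (F k))
    (Z : {j : Fin n // j ≠ k} → Set (GTree α ar)) :
    let ext : Fin n → Set (GTree α ar) := fun j => if h : j = k then ∅ else Z ⟨j, h⟩
    let Lfull : Fin n → Set (GTree α ar) :=
      fun j => if h : j = k then RExp.lang ext (F k) else Z ⟨j, h⟩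
    ((∀ j, Lfull j = RExp.lang Lfull (F j)) ↔
      ∀ (j : Fin n) (h : j ≠ k),
        Z ⟨j, h⟩ = RExp.lang ext (RExp.subst k (F k) (F j))) := by
  intro ext Lfull
  have hLfull : Lfull = Function.update ext k (RExp.lang ext (F k)) := by
    funext j
    by_cases hj : j = k
    · subst hj; simp [Lfull]
    · simp [Lfull, ext, hj]
  have hsubst : ∀ j, RExp.lang ext (RExp.subst k (F k) (F j)) = RExp.lang Lfull (F j) := by
    intro j
    rw [RExp.lang_subst, hLfull]
  have hFk : RExp.lang Lfull (F k) = Lfull k := by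
    rw [hLfull, RExp.lang_update_of_not_varOcc ext _ hk, Function.update_self]
  have hZ : ∀ j (hj : j ≠ k), Lfull j = Z ⟨j, hj⟩ := fun j hj => dif_neg hj
  constructor
  · intro hsol j hj
    rw [← hZ j hj, hsol j, hsubst]
  · intro hsol j
    by_cases hj : j = k
    · subst hj; exact hFk.symm
    · rw [hZ j hj, hsol j hj, hsubst]
end
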